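/- Isothermic surfaces are Moutard nets in the light cone (Theorem 'Isothermic surfaces = Moutard nets in the light cone', forward direction): Let N ≥ 2, let f: ℝ² → ℝᴺ and s: ℝ² → ℝ be twice continuously differentiable with s everywhere positive, and suppose ⟨∂₁f, ∂₂f⟩ = 0 and ∂₁∂₂f = (∂₂s/s)∂₁f + (∂₁s/s)∂₂f hold everywhere on ℝ². Define y: ℝ² → ℝᴺ × ℝ × ℝ by y = s⁻¹·(f, 1, ‖f‖²). Then: (a) y satisfies the Moutard equation ∂₁∂₂y = q·y everywhere, with q = s·∂₁∂₂(s⁻¹); (b) ⟨⟨y, y⟩⟩ = 0 everywhere, where ⟨⟨·,·⟩⟩ is the Minkowski-type bilinear form on ℝᴺ × ℝ × ℝ given by ⟨⟨(v,a,b),(v′,a′,b′)⟩⟩ = ⟨v,v′⟩ − (ab′ + a′b)/2 (so y takes values in the light cone). -/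

import Mathlib

/-- Partial derivative in the first coordinate direction of `ℝ²`. -/
noncomputable def pd1 {E : Type*} [NormedAddCommGroup E] [NormedSpace ℝ E]
    (g : ℝ × ℝ → E) (u : ℝ × ℝ) : E :=
  fderiv ℝ g u (1, 0)

/-- Partial derivative in the second coordinate direction of `ℝ²`. -/
noncomputable def pd2 {E : Type*} [NormedAddCommGroup E] [NormedSpace ℝ E]
    (g : ℝ × ℝ → E) (u : ℝ × ℝ) : E :=
  fderiv ℝ g u (0, 1)

/-- The Minkowski-type bilinear form on `ℝᴺ × ℝ × ℝ`, in the basis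
`e₁, …, e_N, e₀, e_∞` with `⟨e₀, e_∞⟩ = -1/2`. -/
noncomputable def mink {N : ℕ} (p q : EuclideanSpace ℝ (Fin N) × ℝ × ℝ) : ℝ :=
  (inner ℝ p.1 q.1 : ℝ) - (p.2.1 * q.2.2 + q.2.1 * p.2.2) / 2

/-! The lift `g = (f, 1, ‖f‖²)` satisfies the same Laplace equation
`∂₁∂₂g = (∂₂s/s) ∂₁g + (∂₁s/s) ∂₂g` as `f`: for the last component this is where
`⟨∂₁f, ∂₂f⟩ = 0` enters. Since `∂ᵢ(s⁻¹) = -(∂ᵢs/s) s⁻¹`, the gauge `y = s⁻¹ g` cancels the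
first-order terms of the Leibniz rule for `∂₁∂₂(s⁻¹ g)`, leaving `(∂₁∂₂ s⁻¹) g = q y`.
The light cone condition is `⟨⟨g, g⟩⟩ = ‖f‖² - ‖f‖² = 0`. -/

open scoped RealInnerProductSpace

section

variable {G E : Type*} [NormedAddCommGroup G] [NormedSpace ℝ G]
  [NormedAddCommGroup E] [NormedSpace ℝ E]

theorem ContDiff.differentiable_fderiv_apply {g : G → E} (hg : ContDiff ℝ 2 g) (e : G) :
    Differentiable ℝ fun u => fderiv ℝ g u e :=
  ((hg.fderiv_right le_rfl).clm_apply contDiff_const).differentiable one_ne_zero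

theorem fderiv_fun_inv_apply {s : G → ℝ} {u : G} (hs : DifferentiableAt ℝ s u)
    (hsu : s u ≠ 0) (e : G) :
    fderiv ℝ (fun w => (s w)⁻¹) u e = -(fderiv ℝ s u e / s u) * (s u)⁻¹ := by
  have h : HasFDerivAt (fun w => (s w)⁻¹) _ u := (hasFDerivAt_inv hsu).comp u hs.hasFDerivAt
  rw [h.fderiv]
  simp only [ContinuousLinearMap.comp_apply, ContinuousLinearMap.toSpanSingleton_apply,
    smul_eq_mul]
  ring

theorem fderiv_fun_norm_sq_apply {F : Type*} [NormedAddCommGroup F] [InnerProductSpace ℝ F]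
    {f : G → F} {u : G} (hf : DifferentiableAt ℝ f u) (e : G) :
    fderiv ℝ (fun w => ‖f w‖ ^ 2) u e = 2 * ⟪f u, fderiv ℝ f u e⟫ := by
  rw [hf.hasFDerivAt.norm_sq.fderiv]
  simp

theorem pd1_pd2_smul {c : ℝ × ℝ → ℝ} {g : ℝ × ℝ → E}
    (hc : ContDiff ℝ 2 c) (hg : ContDiff ℝ 2 g) (u : ℝ × ℝ) :
    pd1 (fun v => pd2 (fun w => c w • g w) v) u =
      pd1 (fun v => pd2 c v) u • g u + pd2 c u • pd1 g u
      + pd1 c u • pd2 g u + c u • pd1 (fun v => pd2 g v) u := by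
  have hcd := hc.differentiable two_ne_zero
  have hgd := hg.differentiable two_ne_zero
  have hc₂ := hc.differentiable_fderiv_apply (0, 1)
  have hg₂ := hg.differentiable_fderiv_apply (0, 1)
  have hleibniz :
      (fun v => pd2 (fun w => c w • g w) v) = fun v => c v • pd2 g v + pd2 c v • g v := by
    funext v
    simp [pd2, fderiv_fun_smul (hcd v) (hgd v)]
  rw [hleibniz]
  simp only [pd1, pd2]
  rw [fderiv_fun_add ((hcd u).fun_smul (hg₂ u)) ((hc₂ u).fun_smul (hgd u)),
    fderiv_fun_smul (hcd u) (hg₂ u), fderiv_fun_smul (hc₂ u) (hgd u)]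
  simp only [add_apply, smul_apply, ContinuousLinearMap.smulRight_apply]
  abel

theorem fderiv_prodMk_apply {F : Type*} [NormedAddCommGroup F] [NormedSpace ℝ F]
    {g₁ : G → E} {g₂ : G → F} {u : G}
    (hg₁ : DifferentiableAt ℝ g₁ u) (hg₂ : DifferentiableAt ℝ g₂ u) (e : G) :
    fderiv ℝ (fun w => (g₁ w, g₂ w)) u e = (fderiv ℝ g₁ u e, fderiv ℝ g₂ u e) := by
  simp [hg₁.fderiv_prodMk hg₂]

end

def IsConjugateNet {E : Type*} [NormedAddCommGroup E] [NormedSpace ℝ E]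
    (a b : ℝ × ℝ → ℝ) (g : ℝ × ℝ → E) : Prop :=
  ∀ u, pd1 (fun v => pd2 g v) u = a u • pd1 g u + b u • pd2 g u

namespace IsConjugateNet

variable {E F : Type*} [NormedAddCommGroup E] [NormedSpace ℝ E] {a b : ℝ × ℝ → ℝ}

theorem const (x : E) : IsConjugateNet a b fun _ => x := by
  simp [IsConjugateNet, pd1, pd2]

theorem prodMk [NormedAddCommGroup F] [NormedSpace ℝ F] {g₁ : ℝ × ℝ → E} {g₂ : ℝ × ℝ → F}
    (h₁ : IsConjugateNet a b g₁) (h₂ : IsConjugateNet a b g₂)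
    (hg₁ : ContDiff ℝ 2 g₁) (hg₂ : ContDiff ℝ 2 g₂) :
    IsConjugateNet a b fun u => (g₁ u, g₂ u) := by
  intro u
  have hd₁ := hg₁.differentiable two_ne_zero
  have hd₂ := hg₂.differentiable two_ne_zero
  have hpd2 : (fun v => pd2 (fun w => (g₁ w, g₂ w)) v) = fun v => (pd2 g₁ v, pd2 g₂ v) :=
    funext fun v => fderiv_prodMk_apply (hd₁ v) (hd₂ v) _
  rw [hpd2]
  simp only [IsConjugateNet, pd1, pd2] at h₁ h₂ ⊢
  rw [fderiv_prodMk_apply (hg₁.differentiable_fderiv_apply _ u)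
      (hg₂.differentiable_fderiv_apply _ u), fderiv_prodMk_apply (hd₁ u) (hd₂ u),
    fderiv_prodMk_apply (hd₁ u) (hd₂ u), h₁ u, h₂ u]
  simp

theorem norm_sq [NormedAddCommGroup F] [InnerProductSpace ℝ F] {f : ℝ × ℝ → F}
    (h : IsConjugateNet a b f) (hf : ContDiff ℝ 2 f) (horth : ∀ u, ⟪pd1 f u, pd2 f u⟫ = 0) :
    IsConjugateNet a b fun u => ‖f u‖ ^ 2 := by
  intro u
  have hd := hf.differentiable two_ne_zero
  have hpd2 : (fun v => pd2 (fun w => ‖f w‖ ^ 2) v) = fun v => 2 * ⟪f v, pd2 f v⟫ :=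
    funext fun v => fderiv_fun_norm_sq_apply (hd v) _
  rw [hpd2]
  simp only [IsConjugateNet, pd1, pd2] at h horth ⊢
  have hd₂ := hf.differentiable_fderiv_apply (0, 1) u
  rw [fderiv_const_mul ((hd u).inner ℝ hd₂), smul_apply, fderiv_inner_apply ℝ (hd u) hd₂,
    h u, horth u, fderiv_fun_norm_sq_apply (hd u), fderiv_fun_norm_sq_apply (hd u),
    inner_add_right, real_inner_smul_right, real_inner_smul_right]
  simp only [smul_eq_mul]
  ring

theorem pd1_pd2_inv_smul {s : ℝ × ℝ → ℝ} {g : ℝ × ℝ → E}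
    (h : IsConjugateNet (fun u => pd2 s u / s u) (fun u => pd1 s u / s u) g)
    (hs : ContDiff ℝ 2 s) (hs0 : ∀ u, s u ≠ 0) (hg : ContDiff ℝ 2 g) (u : ℝ × ℝ) :
    pd1 (fun v => pd2 (fun w => (s w)⁻¹ • g w) v) u =
      (s u * pd1 (fun v => pd2 (fun w => (s w)⁻¹) v) u) • (s u)⁻¹ • g u := by
  have hsd := hs.differentiable two_ne_zero
  rw [pd1_pd2_smul (c := fun w => (s w)⁻¹) (hs.inv hs0) hg u, h u, smul_smul, mul_right_comm,
    mul_inv_cancel₀ (hs0 u), one_mul]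
  simp only [pd1, pd2, fderiv_fun_inv_apply (hsd u) (hs0 u)]
  module

end IsConjugateNet

theorem mink_smul_lift_self_eq_zero {N : ℕ} (c : ℝ) (x : EuclideanSpace ℝ (Fin N)) :
    mink (c • (x, 1, ‖x‖ ^ 2)) (c • (x, 1, ‖x‖ ^ 2)) = 0 := by
  simp only [mink, Prod.smul_fst, Prod.smul_snd, smul_eq_mul, real_inner_self_eq_norm_sq,
    norm_smul, mul_pow, Real.norm_eq_abs, sq_abs]
  ring

theorem isothermic_moutard_light_cone_general {N : ℕ}
    (f : ℝ × ℝ → EuclideanSpace ℝ (Fin N)) (s : ℝ × ℝ → ℝ)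
    (hf : ContDiff ℝ 2 f) (hs : ContDiff ℝ 2 s) (hs0 : ∀ u, 0 < s u)
    (horth : ∀ u, (inner ℝ (pd1 f u) (pd2 f u) : ℝ) = 0)
    (hkoe : ∀ u, pd1 (fun v => pd2 f v) u =
      (pd2 s u / s u) • pd1 f u + (pd1 s u / s u) • pd2 f u)
    (y : ℝ × ℝ → EuclideanSpace ℝ (Fin N) × ℝ × ℝ)
    (hy : ∀ u, y u = (s u)⁻¹ • (f u, 1, ‖f u‖ ^ 2)) :
    (∀ u, pd1 (fun v => pd2 y v) u =
        (s u * pd1 (fun v => pd2 (fun w => (s w)⁻¹) v) u) • y u) ∧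
    (∀ u, mink (y u) (y u) = 0) := by
  have hlift : IsConjugateNet (fun u => pd2 s u / s u) (fun u => pd1 s u / s u)
      fun u => (f u, (1 : ℝ), ‖f u‖ ^ 2) :=
    IsConjugateNet.prodMk hkoe
      ((IsConjugateNet.const 1).prodMk (IsConjugateNet.norm_sq hkoe hf horth)
        contDiff_const (hf.norm_sq ℝ))
      hf (contDiff_const.prodMk (hf.norm_sq ℝ))
  obtain rfl : y = fun u => (s u)⁻¹ • (f u, (1 : ℝ), ‖f u‖ ^ 2) := funext hy
  exact ⟨hlift.pd1_pd2_inv_smul hs (fun u => (hs0 u).ne')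
      (hf.prodMk (contDiff_const.prodMk (hf.norm_sq ℝ))),
    fun u => mink_smul_lift_self_eq_zero _ _⟩

/-- Isothermic surfaces are Moutard nets in the light cone: the lift
`y = s⁻¹ (f, 1, ‖f‖²)` of an isothermic surface `f` with metric `s`
satisfies the Moutard equation `∂₁∂₂ y = q y` with `q = s ∂₁∂₂(s⁻¹)`, and
takes values in the light cone of the Minkowski form. -/
theorem isothermic_moutard_light_cone {N : ℕ} (hN : 2 ≤ N)
    (f : ℝ × ℝ → EuclideanSpace ℝ (Fin N)) (s : ℝ × ℝ → ℝ)
    (hf : ContDiff ℝ 2 f) (hs : ContDiff ℝ 2 s) (hs0 : ∀ u, 0 < s u)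
    (horth : ∀ u, (inner ℝ (pd1 f u) (pd2 f u) : ℝ) = 0)
    (hkoe : ∀ u, pd1 (fun v => pd2 f v) u =
      (pd2 s u / s u) • pd1 f u + (pd1 s u / s u) • pd2 f u)
    (y : ℝ × ℝ → EuclideanSpace ℝ (Fin N) × ℝ × ℝ)
    (hy : ∀ u, y u = (s u)⁻¹ • (f u, 1, ‖f u‖ ^ 2)) :
    (∀ u, pd1 (fun v => pd2 y v) u =
        (s u * pd1 (fun v => pd2 (fun w => (s w)⁻¹) v) u) • y u) ∧
    (∀ u, mink (y u) (y u) = 0) :=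
  isothermic_moutard_light_cone_general f s hf hs hs0 horth hkoe y hy
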